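/- arXiv:1403.8081 — 2 statements merged into one kernel-verified Lean document; each statement's English description precedes it below -/
import Mathlib

section
/- Let N be a positive integer and t < N. The number of compositions of N into m parts whose first part is not 1 and whose last part exceeds t equals C(N - t - 2, m - 1). -/
/-!
A composition of `N` is determined by its set of cut points, the partial sums strictly between
`0` and `N`, and every subset of `{1, …, N - 1}` arises; `m` parts means `m - 1` cut points. The
first part exceeds `1` and the last part exceeds `t` exactly when all cut points lie in the open
interval `(1, N - t)`, which has `N - t - 2` elements.
-/

namespace Composition

variable {n : ℕ} (c : Composition n)

theorem strictMonoOn_sizeUpTo : StrictMonoOn c.sizeUpTo (Set.Iic c.length) :=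
  fun i hi j hj hij =>
    c.boundary.strictMono (show (⟨i, Nat.lt_succ_of_le hi⟩ : Fin (c.length + 1)) <
      ⟨j, Nat.lt_succ_of_le hj⟩ from hij)

theorem blocks_getD_eq_sizeUpTo_sub (i : ℕ) :
    c.blocks.getD i 0 = c.sizeUpTo (i + 1) - c.sizeUpTo i := by
  rcases lt_or_ge i c.length with hi | hi
  · rw [c.sizeUpTo_succ hi, List.getD_eq_getElem _ _ hi]
    omega
  · rw [List.getD_eq_default _ _ hi, c.sizeUpTo_ofLength_le _ hi,
      c.sizeUpTo_ofLength_le _ (by omega), Nat.sub_self]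

def cuts : Finset ℕ := (Finset.Ioo 0 c.length).image c.sizeUpTo

theorem card_cuts : c.cuts.card = c.length - 1 := by
  rw [cuts, Finset.card_image_of_injOn, Nat.card_Ioo, Nat.sub_zero]
  exact c.strictMonoOn_sizeUpTo.injOn.mono fun i hi => (Finset.mem_Ioo.1 hi).2.le

theorem cuts_subset_Ioo : c.cuts ⊆ Finset.Ioo 0 n := by
  intro j hj
  obtain ⟨i, hi, rfl⟩ := Finset.mem_image.1 hj
  rw [Finset.mem_Ioo] at hi ⊢
  constructor
  · simpa [c.sizeUpTo_zero] using
      c.strictMonoOn_sizeUpTo (Set.mem_Iic.2 (Nat.zero_le _)) (Set.mem_Iic.2 hi.2.le) hi.1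
  · simpa [c.sizeUpTo_length] using
      c.strictMonoOn_sizeUpTo (Set.mem_Iic.2 hi.2.le) (Set.mem_Iic.2 le_rfl) hi.2

theorem mem_boundaries {j : Fin (n + 1)} :
    j ∈ c.boundaries ↔ ∃ i ≤ c.length, c.sizeUpTo i = j := by
  simp only [boundaries, Finset.mem_map, Finset.mem_univ, true_and]
  constructor
  · rintro ⟨i, rfl⟩
    exact ⟨i, Nat.le_of_lt_succ i.2, rfl⟩
  · rintro ⟨i, hi, h⟩
    exact ⟨⟨i, Nat.lt_succ_of_le hi⟩, Fin.ext h⟩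

theorem mem_boundaries_iff_cuts {j : Fin (n + 1)} :
    j ∈ c.boundaries ↔ j = 0 ∨ j = Fin.last n ∨ (j : ℕ) ∈ c.cuts := by
  simp only [mem_boundaries, cuts, Finset.mem_image, Finset.mem_Ioo, Fin.ext_iff, Fin.val_zero,
    Fin.val_last]
  constructor
  · rintro ⟨i, hi, hj⟩
    rw [← hj]
    rcases Nat.eq_zero_or_pos i with rfl | hi0
    · exact Or.inl c.sizeUpTo_zero
    rcases hi.lt_or_eq with hlt | rfl
    · exact Or.inr (Or.inr ⟨i, ⟨hi0, hlt⟩, rfl⟩)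
    · exact Or.inr (Or.inl c.sizeUpTo_length)
  · rintro (h | h | ⟨i, hi, h⟩)
    · exact ⟨0, Nat.zero_le _, c.sizeUpTo_zero.trans h.symm⟩
    · exact ⟨c.length, le_rfl, c.sizeUpTo_length.trans h.symm⟩
    · exact ⟨i, hi.2.le, h⟩

theorem cuts_injective : Function.Injective (cuts : Composition n → Finset ℕ) := by
  intro c d h
  apply (compositionEquiv n).injective
  ext j
  exact (c.mem_boundaries_iff_cuts.trans (by rw [h])).trans d.mem_boundaries_iff_cuts.symm

theorem exists_cuts_eq {s : Finset ℕ} (hs : s ⊆ Finset.Ioo 0 n) :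
    ∃ c : Composition n, c.cuts = s := by
  obtain ⟨d, hd⟩ : ∃ d : CompositionAsSet n,
      ∀ J, J ∈ d.boundaries ↔ J = 0 ∨ J = Fin.last n ∨ (J : ℕ) ∈ s :=
    ⟨⟨{J | J = 0 ∨ J = Fin.last n ∨ (J : ℕ) ∈ s}, by simp, by simp⟩, by simp⟩
  refine ⟨d.toComposition, Finset.ext fun j => ?_⟩
  by_cases hj : j ∈ Finset.Ioo 0 n
  · rw [Finset.mem_Ioo] at hj
    have hJ := d.toComposition.mem_boundaries_iff_cuts (j := ⟨j, by omega⟩)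
    rw [CompositionAsSet.toComposition_boundaries, hd] at hJ
    simpa [Fin.ext_iff, hj.1.ne', hj.2.ne] using hJ.symm
  · exact iff_of_false (fun h => hj (d.toComposition.cuts_subset_Ioo h)) (fun h => hj (hs h))

theorem cuts_subset_Ioo_iff {a b : ℕ} (ha : a < n) (hb : b < n) :
    c.cuts ⊆ Finset.Ioo a (n - b) ↔
      a < c.blocks.getD 0 0 ∧ b < c.blocks.getD (c.length - 1) 0 := by
  have hlen : 0 < c.length := c.length_pos_iff.2 (by omega)
  rw [blocks_getD_eq_sizeUpTo_sub, blocks_getD_eq_sizeUpTo_sub, Nat.sub_add_cancel hlen,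
    sizeUpTo_zero, sizeUpTo_length, Nat.zero_add, Nat.sub_zero]
  constructor
  · intro h
    rcases Nat.lt_or_ge 1 c.length with hlen2 | hlen1
    · have h1 := Finset.mem_Ioo.1 (h (Finset.mem_image_of_mem _
        (Finset.mem_Ioo.2 ⟨one_pos, hlen2⟩)))
      have hpred : c.length - 1 ∈ Finset.Ioo 0 c.length := Finset.mem_Ioo.2 ⟨by omega, by omega⟩
      have h2 := Finset.mem_Ioo.1 (h (Finset.mem_image_of_mem _ hpred))
      omega
    · rw [show c.length - 1 = 0 by omega, c.sizeUpTo_ofLength_le 1 hlen1, sizeUpTo_zero]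
      omega
  · rintro ⟨h1, h2⟩ j hj
    obtain ⟨i, hi, rfl⟩ := Finset.mem_image.1 hj
    rw [Finset.mem_Ioo] at hi ⊢
    have := c.monotone_sizeUpTo (show 1 ≤ i by omega)
    have := c.monotone_sizeUpTo (show i ≤ c.length - 1 by omega)
    omega

theorem card_filter_cuts_mem (T : Finset (Finset ℕ)) (hT : ∀ s ∈ T, s ⊆ Finset.Ioo 0 n) :
    (Finset.univ.filter fun c : Composition n => c.cuts ∈ T).card = T.card := by
  refine Finset.card_bij (fun c _ => c.cuts) (fun c hc => (Finset.mem_filter.1 hc).2)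
    (fun _ _ _ _ h => cuts_injective h) fun s hs => ?_
  obtain ⟨c, rfl⟩ := exists_cuts_eq (hT s hs)
  exact ⟨c, Finset.mem_filter.2 ⟨Finset.mem_univ c, hs⟩, rfl⟩

end Composition

/-- Blackjack dealer counting theorem: for `N ≥ 2`, `t < N`, `m ≥ 1`, the number
of compositions of `N` into `m` parts whose first part is not 1 and whose last
part exceeds `t` equals `C(N - t - 2, m - 1)`.  (With `N = w - d` and
`t = w - s` this is `C(s - d - 2, m - 1)`.) -/
theorem blackjack_count (N t m : ℕ) (hN : 2 ≤ N) (ht : t < N) (hm : 1 ≤ m) :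
    (Finset.univ.filter
        (fun c : Composition N => c.length = m ∧ c.blocks.getD 0 0 ≠ 1 ∧
          t < c.blocks.getD (m - 1) 0)).card
      = (N - t - 2).choose (m - 1) := by
  have hcuts (c : Composition N) :
      (c.length = m ∧ c.blocks.getD 0 0 ≠ 1 ∧ t < c.blocks.getD (m - 1) 0) ↔
        c.cuts ∈ (Finset.Ioo 1 (N - t)).powersetCard (m - 1) := by
    have hlen : 0 < c.length := c.length_pos_iff.2 (by omega)
    have hfirst : 0 < c.blocks.getD 0 0 := by
      rw [List.getD_eq_getElem _ _ hlen]
      exact c.blocks_pos' 0 hlen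
    rw [Finset.mem_powersetCard, c.card_cuts, c.cuts_subset_Ioo_iff (by omega) ht]
    constructor
    · rintro ⟨rfl, h1, hlast⟩
      exact ⟨⟨by omega, hlast⟩, rfl⟩
    · rintro ⟨⟨h1, hlast⟩, hcard⟩
      obtain rfl : c.length = m := by omega
      exact ⟨rfl, by omega, hlast⟩
  rw [Finset.filter_congr fun c _ => hcuts c, Composition.card_filter_cuts_mem,
    Finset.card_powersetCard, Nat.card_Ioo, Nat.sub_sub]
  exact fun s hs =>
    (Finset.mem_powersetCard.1 hs).1.trans (Finset.Ioo_subset_Ioo (by omega) (by omega))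
end

section
/- For positive integers n, m with m ≥ 2, the number of compositions of n into m parts that contain at least one part greater than A, assuming 2(A+1) > n (so at most one part can exceed A), equals m · Σ_{i=A+1}^{n} C(n-i-1, m-2). -/
/-- Generalized binomial coefficient on integers: `C(a,b) = 0` whenever
`b < 0`, `a < 0`, or `b > a`. -/
def ichoose (a b : ℤ) : ℤ :=
  if 0 ≤ b ∧ b ≤ a then ((a.toNat).choose b.toNat : ℤ) else 0

/-!
Since `2 (A + 1) > n`, a composition of `n` has at most one part exceeding `A`, so the
compositions in question are partitioned by the position `j < m` and the value `i ∈ [A + 1, n]`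
of that part. Deleting it is a bijection onto the compositions of `n - i` into `m - 1` parts,
and compositions of `s > 0` into `k + 1` parts correspond to the `k`-subsets of the `s - 1`
inner cut points, giving `C(n - i - 1, m - 2)` for each position.
-/

open Finset

namespace List

theorem sum_eq_getElem_add_sum_eraseIdx {M : Type*} [AddCommMonoid M] (l : List M) {j : ℕ}
    (hj : j < l.length) : l.sum = l[j] + (l.eraseIdx j).sum := by
  conv_lhs => rw [← insertIdx_eraseIdx_getElem hj]
  rw [(perm_insertIdx _ _ (by simp [length_eraseIdx_of_lt hj]; omega)).sum_eq, sum_cons]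

theorem add_le_sum_of_getElem?_eq {j k : ℕ} {a b : ℕ} {l : List ℕ} (hjk : j ≠ k)
    (ha : l[j]? = some a) (hb : l[k]? = some b) : a + b ≤ l.sum := by
  obtain ⟨hj, rfl⟩ := getElem?_eq_some_iff.1 ha
  have hb_mem : b ∈ l.eraseIdx j := mem_eraseIdx_iff_getElem?.2 ⟨k, hjk.symm, hb⟩
  rw [sum_eq_getElem_add_sum_eraseIdx l hj]
  exact Nat.add_le_add_left (le_sum_of_mem hb_mem) _

end List

theorem CompositionAsSet.length_compositionAsSetEquiv_symm {n : ℕ} (hn : 0 < n)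
    (s : Finset (Fin (n - 1))) : ((compositionAsSetEquiv n).symm s).length = #s + 1 := by
  let shift : Fin (n - 1) ↪ Fin (n + 1) := (Fin.castLEEmb (Nat.sub_le n 1)).trans (Fin.succEmb n)
  have hboundaries : ((compositionAsSetEquiv n).symm s).boundaries
      = insert 0 (insert (Fin.last n) (s.map shift)) := by
    ext i
    simp only [compositionAsSetEquiv, Equiv.coe_fn_symm_mk, Set.toFinset_ofPred, mem_filter_univ,
      mem_insert, mem_map]
    refine or_congr_right (or_congr_right (exists_congr fun j => ?_))
    simp [shift, Fin.ext_iff, eq_comm]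
  have h0 : (0 : Fin (n + 1)) ∉ insert (Fin.last n) (s.map shift) := by
    simp [shift, Fin.ext_iff]; omega
  have hlast : Fin.last n ∉ s.map shift := by
    simp [shift, Fin.ext_iff]; omega
  rw [CompositionAsSet.length, hboundaries, card_insert_of_notMem h0, card_insert_of_notMem hlast,
    card_map]
  rfl

theorem ichoose_natCast (a b : ℕ) : ichoose a b = a.choose b := by
  unfold ichoose
  split_ifs with h
  · simp
  · rw [Nat.choose_eq_zero_of_lt (by omega), Nat.cast_zero]

namespace Composition

theorem card_filter_length_eq {n : ℕ} (hn : 0 < n) (k : ℕ) :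
    #{c : Composition n | c.length = k + 1} = (n - 1).choose k := by
  let e := (compositionEquiv n).trans (compositionAsSetEquiv n)
  have hlen (c : Composition n) : c.length = #(e c) + 1 := by
    rw [← CompositionAsSet.length_compositionAsSetEquiv_symm hn, Equiv.trans_apply,
      Equiv.symm_apply_apply]
    exact c.toCompositionAsSet_length.symm
  rw [card_equiv e (t := powersetCard k univ) (fun c => by simp [hlen]), card_powersetCard,
    card_univ, Fintype.card_fin]

theorem card_filter_length_eq_ichoose (n : ℕ) {k : ℕ} (hk : 0 < k) :
    (#{c : Composition n | c.length = k} : ℤ) = ichoose (n - 1) (k - 1) := by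
  obtain ⟨k, rfl⟩ : ∃ k', k = k' + 1 := ⟨k - 1, by omega⟩
  rcases n.eq_zero_or_pos with rfl | hn
  · rw [filter_false_of_mem fun c _ => by simp [(Composition.length_eq_zero c).2 rfl], card_empty, Nat.cast_zero, ichoose, if_neg (by omega)]
  · rw [card_filter_length_eq hn, ← ichoose_natCast]
    push_cast [Nat.cast_sub hn]
    ring_nf

theorem card_filter_length_eq_getElem?_eq {n m j i : ℕ} (hj : j < m) (hi : 0 < i) (hin : i ≤ n) :
    #{c : Composition n | c.length = m ∧ c.blocks[j]? = some i}
      = #{d : Composition (n - i) | d.length = m - 1} := by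
  have hmem_c {c : Composition n} (hc : c ∈ ({c | c.length = m ∧ c.blocks[j]? = some i} :
      Finset (Composition n))) : c.length = m ∧ ∃ h : j < c.blocks.length, c.blocks[j] = i := by
    obtain ⟨hlen, hji⟩ := (mem_filter_univ c).1 hc
    exact ⟨hlen, List.getElem?_eq_some_iff.1 hji⟩
  have hmem_d {d : Composition (n - i)} (hd : d ∈ ({d | d.length = m - 1} :
      Finset (Composition (n - i)))) : d.blocks.length = m - 1 :=
    d.blocks_length.trans ((mem_filter_univ d).1 hd)
  refine card_bij'
    (fun c hc => ⟨c.blocks.eraseIdx j, fun hx => c.blocks_pos (List.mem_of_mem_eraseIdx hx), ?_⟩)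
    (fun d hd => ⟨d.blocks.insertIdx j i, fun hx => ?_, ?_⟩) ?_ ?_ ?_ ?_
  · obtain ⟨-, hj', rfl⟩ := hmem_c hc
    have := c.blocks.sum_eq_getElem_add_sum_eraseIdx hj'
    rw [c.blocks_sum] at this
    omega
  · rcases (List.mem_insertIdx (by rw [hmem_d hd]; omega)).1 hx with rfl | hx
    exacts [hi, d.blocks_pos hx]
  · rw [List.sum_insertIdx (by rw [hmem_d hd]; omega) (fun _ _ => AddCommute.all _ _),
      d.blocks_sum]
    omega
  · intro c hc
    obtain ⟨hlen, hj', -⟩ := hmem_c hc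
    simp [Composition.length, List.length_eraseIdx_of_lt hj', hlen]
  · intro d hd
    have hjd : j ≤ d.blocks.length := by rw [hmem_d hd]; omega
    simp [Composition.length, List.length_insertIdx_of_le_length hjd, hmem_d hd,
      List.getElem?_insertIdx_self]
    omega
  · intro c hc
    obtain ⟨-, hj', rfl⟩ := hmem_c hc
    exact Composition.ext (List.insertIdx_eraseIdx_getElem hj')
  · intro d _
    exact Composition.ext (List.eraseIdx_insertIdx_self i)

theorem card_filter_exists_lt_eq_sum {n m A : ℕ} (hbound : n < 2 * (A + 1)) :
    #{c : Composition n | c.length = m ∧ ∃ x ∈ c.blocks, A < x}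
      = ∑ p ∈ range m ×ˢ Icc (A + 1) n,
          #{c : Composition n | c.length = m ∧ c.blocks[p.1]? = some p.2} := by
  rw [← card_biUnion]
  · congr 1
    ext c
    simp only [mem_filter_univ, mem_biUnion, mem_product, mem_range, mem_Icc]
    constructor
    · rintro ⟨hlen, x, hx, hAx⟩
      obtain ⟨j, hjx⟩ := List.mem_iff_getElem?.1 hx
      have hj : j < c.length := c.blocks_length ▸ (List.getElem?_eq_some_iff.1 hjx).1
      exact ⟨(j, x), ⟨⟨hlen ▸ hj, hAx, c.blocks_sum ▸ List.le_sum_of_mem hx⟩, hlen, hjx⟩⟩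
    · rintro ⟨⟨j, x⟩, ⟨-, hAx, -⟩, hlen, hjx⟩
      exact ⟨hlen, x, List.mem_of_getElem? hjx, hAx⟩
  · rintro ⟨j, x⟩ hp ⟨k, y⟩ hq hne
    simp only [coe_product, coe_range, coe_Icc, Set.mem_prod, Set.mem_Iio, Set.mem_Icc] at hp hq
    refine disjoint_left.2 fun c hc hc' => hne ?_
    obtain ⟨-, hjx⟩ := (mem_filter_univ c).1 hc
    obtain ⟨-, hky⟩ := (mem_filter_univ c).1 hc'
    obtain rfl | hjk := eq_or_ne j k
    · simp_all
    · have := List.add_le_sum_of_getElem?_eq hjk hjx hky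
      rw [c.blocks_sum] at this
      omega

end Composition

theorem num_compositions_big_part_general (n m A : ℕ) (hm : 2 ≤ m)
    (hbound : n < 2 * (A + 1)) :
    ((Finset.univ.filter
        (fun c : Composition n => c.length = m ∧ ∃ x ∈ c.blocks, A < x)).card : ℤ)
      = (m : ℤ) * ∑ i ∈ Finset.Icc (A + 1) n,
          ichoose ((n : ℤ) - (i : ℤ) - 1) ((m : ℤ) - 2) := by
  have hrow : ∀ j ∈ range m,
      ((∑ i ∈ Icc (A + 1) n, #{c : Composition n | c.length = m ∧ c.blocks[j]? = some i} : ℕ) : ℤ)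
        = ∑ i ∈ Icc (A + 1) n, ichoose ((n : ℤ) - (i : ℤ) - 1) ((m : ℤ) - 2) := by
    intro j hj
    push_cast
    refine sum_congr rfl fun i hi => ?_
    rw [mem_range] at hj
    rw [mem_Icc] at hi
    rw [Composition.card_filter_length_eq_getElem?_eq hj (by omega) hi.2,
      Composition.card_filter_length_eq_ichoose _ (by omega)]
    push_cast [hi.2, Nat.cast_sub (by omega : 1 ≤ m)]
    ring_nf
  rw [Composition.card_filter_exists_lt_eq_sum hbound, sum_product, Nat.cast_sum,
    sum_congr rfl hrow, sum_const, card_range, nsmul_eq_mul]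

/-- For `m ≥ 2` and `2(A+1) > n` (so at most one part can exceed `A`), the
number of compositions of `n` into `m` parts containing at least one part
greater than `A` equals `m ∑_{i=A+1}^{n} C(n-i-1, m-2)`. -/
theorem num_compositions_big_part (n m A : ℕ) (hn : 0 < n) (hm : 2 ≤ m)
    (hA : 0 < A) (hbound : n < 2 * (A + 1)) :
    ((Finset.univ.filter
        (fun c : Composition n => c.length = m ∧ ∃ x ∈ c.blocks, A < x)).card : ℤ)
      = (m : ℤ) * ∑ i ∈ Finset.Icc (A + 1) n,
          ichoose ((n : ℤ) - (i : ℤ) - 1) ((m : ℤ) - 2) :=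
  num_compositions_big_part_general n m A hm hbound
end
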